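/- Let G ∈ 𝕆^{n×k} with tr(GᵀD) ≠ 0 be a local maximizer of η on 𝕆^{n×k}. Then the range of G is an eigenspace of E(G), i.e., E(G) G = G (Gᵀ E(G) G), and the smallest eigenvalue of the symmetric k×k matrix Gᵀ E(G) G is at most μ_k, where μ₁ ≤ μ₂ ≤ … ≤ μ_n are the eigenvalues of E(G) arranged in nondecreasing order (counted with multiplicity). -/

import Mathlib

open Matrix

/-- The objective `η(G) = tr(GᵀD)² / tr(GᵀAG)`. -/
noncomputable def eta {n k : ℕ} (A : Matrix (Fin n) (Fin n) ℝ)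
    (D G : Matrix (Fin n) (Fin k) ℝ) : ℝ :=
  (Matrix.trace (Gᵀ * D)) ^ 2 / Matrix.trace (Gᵀ * A * G)

/-- `ξ(G) = tr(GᵀAG) / tr(GᵀD)`. -/
noncomputable def xi {n k : ℕ} (A : Matrix (Fin n) (Fin n) ℝ)
    (D G : Matrix (Fin n) (Fin k) ℝ) : ℝ :=
  Matrix.trace (Gᵀ * A * G) / Matrix.trace (Gᵀ * D)

/-- `sym(B) = (B + Bᵀ)/2`. -/
noncomputable def symPart {k : ℕ} (B : Matrix (Fin k) (Fin k) ℝ) : Matrix (Fin k) (Fin k) ℝ :=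
  (1 / 2 : ℝ) • (B + Bᵀ)

/-- `M(G) = sym(GᵀAG − ξ(G)·GᵀD)`. -/
noncomputable def Mmat {n k : ℕ} (A : Matrix (Fin n) (Fin n) ℝ)
    (D G : Matrix (Fin n) (Fin k) ℝ) : Matrix (Fin k) (Fin k) ℝ :=
  symPart (Gᵀ * A * G - xi A D G • (Gᵀ * D))

/-- `E(G) = A − ξ(G)·(DGᵀ + GDᵀ)`. -/
noncomputable def Emat {n k : ℕ} (A : Matrix (Fin n) (Fin n) ℝ)
    (D G : Matrix (Fin n) (Fin k) ℝ) : Matrix (Fin n) (Fin n) ℝ :=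
  A - xi A D G • (D * Gᵀ + G * Dᵀ)

/-- The Frobenius norm of a real matrix. -/
noncomputable def frobNorm {n k : ℕ} (M : Matrix (Fin n) (Fin k) ℝ) : ℝ :=
  Real.sqrt (∑ i, ∑ j, (M i j) ^ 2)

/-- `G` is a local maximizer of `η` on the Stiefel manifold `𝕆^{n×k}`. -/
def IsLocalMaxEta {n k : ℕ} (A : Matrix (Fin n) (Fin n) ℝ)
    (D G : Matrix (Fin n) (Fin k) ℝ) : Prop :=
  Gᵀ * G = 1 ∧ ∃ ε > (0 : ℝ), ∀ G' : Matrix (Fin n) (Fin k) ℝ,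
    G'ᵀ * G' = 1 → frobNorm (G' - G) < ε → eta A D G' ≤ eta A D G

/-- If `A` is symmetric then `E(G)` is symmetric (Hermitian over `ℝ`). -/
lemma Emat_isHermitian {n k : ℕ} {A : Matrix (Fin n) (Fin n) ℝ} (hA : A.IsHermitian)
    (D G : Matrix (Fin n) (Fin k) ℝ) : (Emat A D G).IsHermitian := by
  have hAT : Aᵀ = A := by
    rw [← Matrix.conjTranspose_eq_transpose_of_trivial]; exact hA
  show (Emat A D G)ᴴ = Emat A D G
  rw [Matrix.conjTranspose_eq_transpose_of_trivial]
  simp [Emat, Matrix.transpose_sub, Matrix.transpose_smul, Matrix.transpose_add,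
    Matrix.transpose_mul, Matrix.transpose_transpose, hAT, add_comm]

/-- Congruence `Gᵀ E G` of a symmetric matrix is symmetric. -/
lemma transpose_mul_mul_isHermitian {n k : ℕ} {E : Matrix (Fin n) (Fin n) ℝ}
    (hE : E.IsHermitian) (G : Matrix (Fin n) (Fin k) ℝ) : (Gᵀ * E * G).IsHermitian := by
  have := Matrix.isHermitian_conjTranspose_mul_mul G hE
  rwa [Matrix.conjTranspose_eq_transpose_of_trivial] at this

/-
Rotate the unit vector `G c` (for a unit `c ∈ ℝᵏ`) towards a unit vector `v ⟂ range G` by the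
angle `θ` with `tan (θ / 2) = t`. This keeps `G` on the Stiefel manifold, and after clearing
denominators `η(Gₜ) - η(G)` becomes a quartic polynomial in `t`, whose linear coefficient must
vanish and whose quadratic coefficient must be nonpositive at a local maximiser.

The first-order conditions, for all `v ⟂ range G`, say that `A G - ξ D` has its range in
`range G`, which is equivalent to `E G = G (Gᵀ E G)`. For the eigenvalue bound let `v` be a unit
eigenvector of `E` for its smallest eigenvalue `μ₁`. If `Gᵀ v ≠ 0`, then `Gᵀ v` is an eigenvector
of `Gᵀ E G` for `μ₁`. Otherwise the second-order condition with `c = eⱼ`, where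
`tr (Gᵀ D) (Gᵀ D)ⱼⱼ > 0`, forces `(Gᵀ E G)ⱼⱼ < μ₁`. Either way the smallest eigenvalue of
`Gᵀ E G` is at most `μ₁ ≤ μₖ`.
-/

open Filter Topology

theorem Matrix.IsHermitian.iInf_eigenvalues_mul_dotProduct_le {n : Type*} [Fintype n]
    [DecidableEq n] [Nonempty n] {B : Matrix n n ℝ} (hB : B.IsHermitian) (x : n → ℝ) :
    (⨅ i, hB.eigenvalues i) * (x ⬝ᵥ x) ≤ x ⬝ᵥ (B *ᵥ x) := by
  set l := ⨅ i, hB.eigenvalues i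
  have hpsd : (B - algebraMap ℝ _ l).PosSemidef := by
    refine posSemidef_iff_isHermitian_and_spectrum_nonneg.mpr
      ⟨hB.sub ((IsSelfAdjoint.all l).algebraMap _), ?_⟩
    rintro _ hμ
    rw [← spectrum.sub_singleton_eq, hB.spectrum_real_eq_range_eigenvalues] at hμ
    obtain ⟨_, ⟨i, rfl⟩, _, rfl, rfl⟩ := hμ
    exact sub_nonneg.mpr (ciInf_le (Set.finite_range hB.eigenvalues).bddBelow i)
  simpa [Algebra.algebraMap_eq_smul_one, sub_mulVec, smul_mulVec] using
    hpsd.dotProduct_mulVec_nonneg x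

theorem Matrix.IsHermitian.iInf_eigenvalues_le_of_mulVec_eq {n : Type*} [Fintype n]
    [DecidableEq n] [Nonempty n] {B : Matrix n n ℝ} (hB : B.IsHermitian) {x : n → ℝ}
    (hx : x ≠ 0) {μ : ℝ} (hBx : B *ᵥ x = μ • x) : ⨅ i, hB.eigenvalues i ≤ μ := by
  have hxx : 0 < x ⬝ᵥ x := by simpa using dotProduct_star_self_pos_iff.mpr hx
  have := hB.iInf_eigenvalues_mul_dotProduct_le x
  rw [hBx, dotProduct_smul, smul_eq_mul] at this
  exact le_of_mul_le_mul_right this hxx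

theorem dotProduct_self_eq_one_of_norm_eq_one {n : Type*} [Fintype n]
    {x : EuclideanSpace ℝ n} (hx : ‖x‖ = 1) : ⇑x ⬝ᵥ ⇑x = 1 := by
  have := real_inner_self_eq_norm_sq x
  rw [hx, EuclideanSpace.inner_eq_star_dotProduct] at this
  simpa using this

theorem trace_transpose_mul_mul_pos {n ι : Type*} [Fintype n] [Fintype ι] [DecidableEq ι]
    [Nonempty ι] {A : Matrix n n ℝ} (hA : A.PosDef) {G : Matrix n ι ℝ} (hG : Gᵀ * G = 1) :
    0 < trace (Gᵀ * A * G) := by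
  have hinj : Function.Injective G.mulVec := fun x y h => by
    simpa [mulVec_mulVec, hG] using congrArg (Gᵀ *ᵥ ·) h
  simpa using (hA.conjTranspose_mul_mul_same hinj).trace_pos

theorem exists_pos_trace_mul_diag {n : Type*} [Fintype n] {X : Matrix n n ℝ}
    (hX : trace X ≠ 0) : ∃ j, 0 < trace X * X j j := by
  by_contra! h
  have : trace X * trace X ≤ 0 := by
    rw [trace, Finset.mul_sum]
    exact Finset.sum_nonpos fun j _ => h j
  exact hX (mul_self_eq_zero.mp (le_antisymm this (mul_self_nonneg _)))

theorem quartic_coeffs_of_eventually_nonpos {c₁ c₂ c₃ c₄ : ℝ}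
    (h : ∀ᶠ t in 𝓝 0, c₁ * t + c₂ * t ^ 2 + c₃ * t ^ 3 + c₄ * t ^ 4 ≤ 0) :
    c₁ = 0 ∧ c₂ ≤ 0 := by
  have hcont : Continuous fun t : ℝ => c₁ + c₂ * t + c₃ * t ^ 2 + c₄ * t ^ 3 := by fun_prop
  have hlim : ∀ s : Set ℝ, Tendsto (fun t => c₁ + c₂ * t + c₃ * t ^ 2 + c₄ * t ^ 3) (𝓝[s] 0)
      (𝓝 c₁) := fun s => by simpa using (hcont.tendsto 0).mono_left nhdsWithin_le_nhds
  have hc₁ : c₁ = 0 := by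
    apply le_antisymm
    · refine le_of_tendsto (hlim (Set.Ioi 0)) ?_
      filter_upwards [nhdsWithin_le_nhds h, self_mem_nhdsWithin] with t ht (htpos : 0 < t)
      nlinarith
    · refine ge_of_tendsto (hlim (Set.Iio 0)) ?_
      filter_upwards [nhdsWithin_le_nhds h, self_mem_nhdsWithin] with t ht (htneg : t < 0)
      nlinarith
  subst hc₁
  refine ⟨rfl, ?_⟩
  have hcont₂ : Continuous fun t : ℝ => c₂ + c₃ * t + c₄ * t ^ 2 := by fun_prop
  refine le_of_tendsto (x := 𝓝[>] (0 : ℝ))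
    (by simpa using (hcont₂.tendsto 0).mono_left (nhdsWithin_le_nhds (s := Set.Ioi 0))) ?_
  filter_upwards [nhdsWithin_le_nhds h, self_mem_nhdsWithin] with t ht (htpos : 0 < t)
  nlinarith [mul_pos htpos htpos]

section RankOneUpdate

variable {m ι : Type*} [Fintype m] (G : Matrix m ι ℝ) (w : m → ℝ) (c : ι → ℝ)

theorem transpose_add_vecMulVec_mul_self :
    (G + vecMulVec w c)ᵀ * (G + vecMulVec w c) =
      Gᵀ * G + vecMulVec (Gᵀ *ᵥ w) c + vecMulVec c (Gᵀ *ᵥ w) + (w ⬝ᵥ w) • vecMulVec c c := by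
  rw [transpose_add, transpose_vecMulVec, Matrix.add_mul, Matrix.mul_add, Matrix.mul_add,
    mul_vecMulVec, vecMulVec_mul, vecMulVec_mul_vecMulVec, vecMulVec_smul, ← mulVec_transpose]
  abel

variable [Fintype ι]

theorem trace_transpose_add_vecMulVec_mul (D : Matrix m ι ℝ) :
    trace ((G + vecMulVec w c)ᵀ * D) = trace (Gᵀ * D) + w ⬝ᵥ (D *ᵥ c) := by
  rw [transpose_add, Matrix.add_mul, trace_add, transpose_vecMulVec, vecMulVec_mul,
    trace_vecMulVec, dotProduct_comm, ← dotProduct_mulVec]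

theorem trace_transpose_add_vecMulVec_mul_mul {A : Matrix m m ℝ} (hA : Aᵀ = A) :
    trace ((G + vecMulVec w c)ᵀ * A * (G + vecMulVec w c)) =
      trace (Gᵀ * A * G) + 2 * (w ⬝ᵥ (A *ᵥ (G *ᵥ c))) + (c ⬝ᵥ c) * (w ⬝ᵥ (A *ᵥ w)) := by
  have hAw : A *ᵥ w = w ᵥ* A := by rw [← vecMul_transpose, hA]
  rw [transpose_add, transpose_vecMulVec, Matrix.add_mul, Matrix.add_mul, Matrix.mul_add,
    Matrix.mul_add, trace_add, trace_add, trace_add, mul_vecMulVec, vecMulVec_mul, vecMulVec_mul,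
    vecMulVec_mul, vecMul_vecMulVec, trace_vecMulVec, trace_vecMulVec, trace_vecMulVec,
    ← mulVec_mulVec, mulVec_transpose, ← dotProduct_mulVec, dotProduct_comm c,
    ← dotProduct_mulVec, ← dotProduct_mulVec, dotProduct_smul, ← dotProduct_mulVec, hAw,
    ← dotProduct_mulVec, smul_eq_mul]
  ring

end RankOneUpdate

section StiefelRotation

variable {m ι : Type*} [Fintype m] [Fintype ι]

/-- The rotation by the angle `θ` with `cos θ = α`, `sin θ = β` in the plane spanned by `G *ᵥ c`
and `v`, applied to the columns of `G`. -/
def stiefelRotation (G : Matrix m ι ℝ) (c : ι → ℝ) (v : m → ℝ) (α β : ℝ) : Matrix m ι ℝ :=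
  G + vecMulVec ((α - 1) • (G *ᵥ c) + β • v) c

variable {G : Matrix m ι ℝ} {c : ι → ℝ} {v : m → ℝ} {α β : ℝ}

theorem trace_stiefelRotation_transpose_mul (D : Matrix m ι ℝ) :
    trace ((stiefelRotation G c v α β)ᵀ * D) =
      trace (Gᵀ * D) + (α - 1) * ((G *ᵥ c) ⬝ᵥ (D *ᵥ c)) + β * (v ⬝ᵥ (D *ᵥ c)) := by
  rw [stiefelRotation, trace_transpose_add_vecMulVec_mul, add_dotProduct, smul_dotProduct,
    smul_dotProduct, smul_eq_mul, smul_eq_mul, add_assoc]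

theorem trace_stiefelRotation_transpose_mul_mul {A : Matrix m m ℝ} (hA : Aᵀ = A)
    (hc : c ⬝ᵥ c = 1) (hαβ : α ^ 2 + β ^ 2 = 1) :
    trace ((stiefelRotation G c v α β)ᵀ * A * stiefelRotation G c v α β) =
      trace (Gᵀ * A * G) + β ^ 2 * (v ⬝ᵥ (A *ᵥ v) - (G *ᵥ c) ⬝ᵥ (A *ᵥ (G *ᵥ c)))
        + 2 * α * β * (v ⬝ᵥ (A *ᵥ (G *ᵥ c))) := by
  have hsymm : (G *ᵥ c) ⬝ᵥ (A *ᵥ v) = v ⬝ᵥ (A *ᵥ (G *ᵥ c)) := by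
    rw [dotProduct_mulVec, ← mulVec_transpose, hA, dotProduct_comm]
  rw [stiefelRotation, trace_transpose_add_vecMulVec_mul_mul _ _ _ hA, hc]
  simp only [mulVec_add, mulVec_smul, dotProduct_add, add_dotProduct, dotProduct_smul,
    smul_dotProduct, smul_eq_mul, hsymm]
  linear_combination ((G *ᵥ c) ⬝ᵥ (A *ᵥ (G *ᵥ c))) * hαβ

variable [DecidableEq ι]

theorem transpose_mulVec_rotation (hG : Gᵀ * G = 1) (hGv : Gᵀ *ᵥ v = 0) :
    Gᵀ *ᵥ ((α - 1) • (G *ᵥ c) + β • v) = (α - 1) • c := by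
  rw [mulVec_add, mulVec_smul, mulVec_smul, mulVec_mulVec, hG, one_mulVec, hGv, smul_zero,
    add_zero]

theorem dotProduct_self_rotation (hG : Gᵀ * G = 1) (hc : c ⬝ᵥ c = 1) (hv : v ⬝ᵥ v = 1)
    (hGv : Gᵀ *ᵥ v = 0) :
    ((α - 1) • (G *ᵥ c) + β • v) ⬝ᵥ ((α - 1) • (G *ᵥ c) + β • v) = (α - 1) ^ 2 + β ^ 2 := by
  have hu : (G *ᵥ c) ⬝ᵥ (G *ᵥ c) = 1 := by
    rw [dotProduct_mulVec, ← mulVec_transpose, mulVec_mulVec, hG, one_mulVec, hc]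
  have huv : (G *ᵥ c) ⬝ᵥ v = 0 := by
    rw [dotProduct_comm, dotProduct_mulVec, ← mulVec_transpose, hGv, zero_dotProduct]
  simp only [dotProduct_add, add_dotProduct, dotProduct_smul, smul_dotProduct, smul_eq_mul, hu,
    huv, dotProduct_comm v (G *ᵥ c), hv]
  ring

theorem stiefelRotation_transpose_mul_self (hG : Gᵀ * G = 1) (hc : c ⬝ᵥ c = 1)
    (hv : v ⬝ᵥ v = 1) (hGv : Gᵀ *ᵥ v = 0) (hαβ : α ^ 2 + β ^ 2 = 1) :
    (stiefelRotation G c v α β)ᵀ * stiefelRotation G c v α β = 1 := by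
  rw [stiefelRotation, transpose_add_vecMulVec_mul_self, transpose_mulVec_rotation hG hGv,
    dotProduct_self_rotation hG hc hv hGv, hG, smul_vecMulVec, vecMulVec_smul]
  have : (α - 1) + (α - 1) + ((α - 1) ^ 2 + β ^ 2) = 0 := by linear_combination hαβ
  rw [add_assoc, ← add_smul, add_assoc, ← add_smul, ← add_assoc, this, zero_smul, add_zero]

end StiefelRotation

section LocalMax

variable {n k : ℕ} {A : Matrix (Fin n) (Fin n) ℝ} {D G : Matrix (Fin n) (Fin k) ℝ}
  {v : Fin n → ℝ} {c : Fin k → ℝ}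

theorem frobNorm_vecMulVec (w : Fin n → ℝ) (c : Fin k → ℝ) :
    frobNorm (vecMulVec w c) = √((w ⬝ᵥ w) * (c ⬝ᵥ c)) := by
  simp only [frobNorm, vecMulVec_apply, dotProduct, Finset.sum_mul_sum, mul_pow]
  congr 1
  exact Finset.sum_congr rfl fun _ _ => Finset.sum_congr rfl fun _ _ => by ring

theorem frobNorm_stiefelRotation_sub (hG : Gᵀ * G = 1) (hc : c ⬝ᵥ c = 1) (hv : v ⬝ᵥ v = 1)
    (hGv : Gᵀ *ᵥ v = 0) (α β : ℝ) :
    frobNorm (stiefelRotation G c v α β - G) = √((α - 1) ^ 2 + β ^ 2) := by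
  rw [stiefelRotation, add_sub_cancel_left, frobNorm_vecMulVec,
    dotProduct_self_rotation hG hc hv hGv, hc, mul_one]

theorem IsLocalMaxEta.eventually_eta_stiefelRotation_le (hloc : IsLocalMaxEta A D G)
    (hc : c ⬝ᵥ c = 1) (hv : v ⬝ᵥ v = 1) (hGv : Gᵀ *ᵥ v = 0) :
    ∀ᶠ t in 𝓝 (0 : ℝ),
      eta A D (stiefelRotation G c v ((1 - t ^ 2) / (1 + t ^ 2)) (2 * t / (1 + t ^ 2))) ≤
        eta A D G := by
  obtain ⟨hG, ε, hε, hmax⟩ := hloc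
  filter_upwards [Metric.ball_mem_nhds (0 : ℝ) (half_pos hε)] with t ht
  rw [Metric.mem_ball, Real.dist_eq, sub_zero] at ht
  have ht2 : 0 < 1 + t ^ 2 := by positivity
  refine hmax _ (stiefelRotation_transpose_mul_self hG hc hv hGv ?_) ?_
  · field_simp; ring
  rw [frobNorm_stiefelRotation_sub hG hc hv hGv, Real.sqrt_lt' hε]
  have : ((1 - t ^ 2) / (1 + t ^ 2) - 1) ^ 2 + (2 * t / (1 + t ^ 2)) ^ 2 =
      4 * t ^ 2 / (1 + t ^ 2) := by
    field_simp; ring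
  rw [this, div_lt_iff₀ ht2]
  nlinarith [abs_lt.mp ht, sq_abs t, sq_nonneg t]

theorem IsLocalMaxEta.rotation_conditions [NeZero k] (hA : A.PosDef)
    (htr : trace (Gᵀ * D) ≠ 0) (hloc : IsLocalMaxEta A D G) (hc : c ⬝ᵥ c = 1)
    (hv : v ⬝ᵥ v = 1) (hGv : Gᵀ *ᵥ v = 0) :
    trace (Gᵀ * A * G) * (v ⬝ᵥ (D *ᵥ c)) =
        trace (Gᵀ * D) * (v ⬝ᵥ (A *ᵥ (G *ᵥ c))) ∧
      trace (Gᵀ * A * G) * (v ⬝ᵥ (D *ᵥ c)) ^ 2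
          - trace (Gᵀ * D) * trace (Gᵀ * A * G) * ((G *ᵥ c) ⬝ᵥ (D *ᵥ c))
          - trace (Gᵀ * D) ^ 2 * (v ⬝ᵥ (A *ᵥ v) - (G *ᵥ c) ⬝ᵥ (A *ᵥ (G *ᵥ c))) ≤ 0 := by
  have hG := hloc.1
  have hAT : Aᵀ = A := (isHermitian_iff_isSymm.mp hA.1).eq
  set p := trace (Gᵀ * D)
  set q := trace (Gᵀ * A * G)
  set a := v ⬝ᵥ (D *ᵥ c)
  set b := (G *ᵥ c) ⬝ᵥ (D *ᵥ c)
  set g := (G *ᵥ c) ⬝ᵥ (A *ᵥ (G *ᵥ c))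
  set h := v ⬝ᵥ (A *ᵥ (G *ᵥ c))
  set m := v ⬝ᵥ (A *ᵥ v)
  have hq : 0 < q := trace_transpose_mul_mul_pos hA hG
  -- this quartic is `(1 + t²)² q q(Gₜ) (η(Gₜ) - η(G))`, where `Gₜ` is the rotation by `θ(t)`
  have hquartic : ∀ᶠ t in 𝓝 (0 : ℝ), 4 * (p * q * a - p ^ 2 * h) * t
      + 4 * (q * a ^ 2 - p * q * b - p ^ 2 * (m - g)) * t ^ 2
      + (4 * q * a * (p - 2 * b) + 4 * p ^ 2 * h) * t ^ 3
      + (q * (p - 2 * b) ^ 2 - p ^ 2 * q) * t ^ 4 ≤ 0 := by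
    filter_upwards [hloc.eventually_eta_stiefelRotation_le hc hv hGv] with t ht
    have ht2 : 0 < 1 + t ^ 2 := by positivity
    set α := (1 - t ^ 2) / (1 + t ^ 2)
    set β := 2 * t / (1 + t ^ 2)
    have hαβ : α ^ 2 + β ^ 2 = 1 := by simp only [α, β]; field_simp; ring
    have hqt :=
      trace_transpose_mul_mul_pos hA (stiefelRotation_transpose_mul_self hG hc hv hGv hαβ)
    rw [trace_stiefelRotation_transpose_mul_mul hAT hc hαβ] at hqt
    rw [eta, eta, trace_stiefelRotation_transpose_mul,
      trace_stiefelRotation_transpose_mul_mul hAT hc hαβ, div_le_div_iff₀ hqt hq] at ht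
    have hid : 4 * (p * q * a - p ^ 2 * h) * t
        + 4 * (q * a ^ 2 - p * q * b - p ^ 2 * (m - g)) * t ^ 2
        + (4 * q * a * (p - 2 * b) + 4 * p ^ 2 * h) * t ^ 3
        + (q * (p - 2 * b) ^ 2 - p ^ 2 * q) * t ^ 4 =
        (1 + t ^ 2) ^ 2 * ((p + (α - 1) * b + β * a) ^ 2 * q
          - p ^ 2 * (q + β ^ 2 * (m - g) + 2 * α * β * h)) := by
      simp only [α, β]; field_simp; ring
    rw [hid]
    exact mul_nonpos_of_nonneg_of_nonpos (by positivity) (by linarith)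
  obtain ⟨hfirst, hsecond⟩ := quartic_coeffs_of_eventually_nonpos hquartic
  refine ⟨?_, by linarith⟩
  have : p * (q * a - p * h) = 0 := by linear_combination hfirst / 4
  linear_combination (mul_eq_zero.mp this).resolve_left htr

theorem IsLocalMaxEta.trace_mul_dotProduct_eq [NeZero k] (hA : A.PosDef)
    (htr : trace (Gᵀ * D) ≠ 0) (hloc : IsLocalMaxEta A D G) (hc : c ⬝ᵥ c = 1)
    (hGv : Gᵀ *ᵥ v = 0) :
    trace (Gᵀ * A * G) * (v ⬝ᵥ (D *ᵥ c)) = trace (Gᵀ * D) * (v ⬝ᵥ (A *ᵥ (G *ᵥ c))) := by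
  rcases eq_or_ne v 0 with rfl | hv
  · simp
  have hvv : 0 < v ⬝ᵥ v := by simpa using dotProduct_star_self_pos_iff.mpr hv
  set r := √(v ⬝ᵥ v)
  have hr : r ≠ 0 := (Real.sqrt_pos.mpr hvv).ne'
  have hunit : (r⁻¹ • v) ⬝ᵥ (r⁻¹ • v) = 1 := by
    rw [smul_dotProduct, dotProduct_smul, smul_eq_mul, smul_eq_mul, ← mul_assoc, ← mul_inv,
      ← sq, Real.sq_sqrt hvv.le, inv_mul_cancel₀ hvv.ne']
  have h := (hloc.rotation_conditions hA htr hc hunit (by rw [mulVec_smul, hGv, smul_zero])).1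
  simp only [smul_dotProduct, smul_eq_mul, mul_left_comm _ r⁻¹] at h
  exact mul_left_cancel₀ (inv_ne_zero hr) h

theorem Emat_mul_sub_mul_transpose_mul_Emat_mul (hG : Gᵀ * G = 1) :
    Emat A D G * G - G * (Gᵀ * Emat A D G * G) =
      (A * G - xi A D G • D) - G * (Gᵀ * (A * G - xi A D G • D)) := by
  simp only [Emat, Matrix.sub_mul, Matrix.mul_sub, Matrix.smul_mul, Matrix.mul_smul,
    Matrix.add_mul, Matrix.mul_add, Matrix.mul_assoc, smul_add, hG]
  rw [← Matrix.mul_assoc Gᵀ G, hG]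
  simp only [Matrix.mul_one, Matrix.one_mul]
  abel

theorem IsLocalMaxEta.Emat_mul_eq [NeZero k] (hA : A.PosDef) (htr : trace (Gᵀ * D) ≠ 0)
    (hloc : IsLocalMaxEta A D G) : Emat A D G * G = G * (Gᵀ * Emat A D G * G) := by
  have hG := hloc.1
  set R := A * G - xi A D G • D with hR
  set N := R - G * (Gᵀ * R)
  have hGN : Gᵀ * N = 0 := by
    rw [Matrix.mul_sub, ← Matrix.mul_assoc, ← Matrix.mul_assoc, hG, Matrix.one_mul, sub_self]
  suffices hcol : ∀ j, N *ᵥ Pi.single j 1 = 0 by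
    rw [← sub_eq_zero, Emat_mul_sub_mul_transpose_mul_Emat_mul hG]
    change N = 0
    ext i j
    simpa [mulVec_single_one] using congrFun (hcol j) i
  intro j
  set z := N *ᵥ Pi.single j 1
  have hGz : Gᵀ *ᵥ z = 0 := by rw [mulVec_mulVec, hGN, zero_mulVec]
  -- `z ⟂ R eⱼ` is the first-order condition in direction `z`, and `z ⟂ G Gᵀ R eⱼ` as `Gᵀ z = 0`
  have hzR : z ⬝ᵥ (R *ᵥ Pi.single j 1) = 0 := by
    have h := hloc.trace_mul_dotProduct_eq (c := Pi.single j 1) hA htr (by simp) hGz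
    have hxi : xi A D G * trace (Gᵀ * D) = trace (Gᵀ * A * G) := div_mul_cancel₀ _ htr
    rw [hR]
    simp only [sub_mulVec, smul_mulVec, ← mulVec_mulVec, dotProduct_sub, dotProduct_smul,
      smul_eq_mul]
    refine (mul_eq_zero.mp ?_).resolve_left htr
    linear_combination -h - (z ⬝ᵥ (D *ᵥ Pi.single j 1)) * hxi
  have hzGR : z ⬝ᵥ ((G * (Gᵀ * R)) *ᵥ Pi.single j 1) = 0 := by
    rw [← mulVec_mulVec, dotProduct_mulVec, ← mulVec_transpose, hGz, zero_dotProduct]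
  have hzz : z ⬝ᵥ (N *ᵥ Pi.single j 1) = 0 := by
    rw [sub_mulVec, dotProduct_sub, hzR, hzGR, sub_zero]
  exact dotProduct_self_eq_zero.mp hzz

theorem dotProduct_Emat_mulVec_of_transpose_mulVec_eq_zero (hGv : Gᵀ *ᵥ v = 0) :
    v ⬝ᵥ (Emat A D G *ᵥ v) = v ⬝ᵥ (A *ᵥ v) := by
  have hvG : v ᵥ* G = 0 := by rw [← mulVec_transpose, hGv]
  simp only [Emat, sub_mulVec, smul_mulVec, add_mulVec, ← mulVec_mulVec, hGv, mulVec_zero,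
    dotProduct_mulVec v G, hvG, zero_dotProduct, dotProduct_sub, dotProduct_smul, dotProduct_add,
    dotProduct_zero, smul_eq_mul]
  ring

theorem dotProduct_transpose_mul_Emat_mul_mulVec (hG : Gᵀ * G = 1) :
    c ⬝ᵥ ((Gᵀ * Emat A D G * G) *ᵥ c) =
      (G *ᵥ c) ⬝ᵥ (A *ᵥ (G *ᵥ c)) - 2 * xi A D G * ((G *ᵥ c) ⬝ᵥ (D *ᵥ c)) := by
  have hGGc : Gᵀ *ᵥ (G *ᵥ c) = c := by rw [mulVec_mulVec, hG, one_mulVec]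
  rw [← mulVec_mulVec, ← mulVec_mulVec, dotProduct_mulVec c, vecMul_transpose]
  simp only [Emat, sub_mulVec, smul_mulVec, add_mulVec, ← mulVec_mulVec, hGGc, dotProduct_sub,
    dotProduct_smul, dotProduct_add, smul_eq_mul]
  rw [dotProduct_mulVec (G *ᵥ c) G, ← mulVec_transpose, hGGc, dotProduct_mulVec c,
    vecMul_transpose, dotProduct_comm (D *ᵥ c)]
  ring

theorem IsLocalMaxEta.iInf_eigenvalues_le_of_transpose_mulVec_eq_zero [NeZero k]
    (hA : A.PosDef) (htr : trace (Gᵀ * D) ≠ 0) (hloc : IsLocalMaxEta A D G)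
    (hv : v ⬝ᵥ v = 1) (hGv : Gᵀ *ᵥ v = 0) {μ : ℝ} (hEv : Emat A D G *ᵥ v = μ • v) :
    ⨅ j, (transpose_mul_mul_isHermitian (Emat_isHermitian hA.1 D G) G).eigenvalues j ≤ μ := by
  set hM := transpose_mul_mul_isHermitian (Emat_isHermitian hA.1 D G) G
  set p := trace (Gᵀ * D)
  set q := trace (Gᵀ * A * G)
  obtain ⟨j, hpb⟩ := exists_pos_trace_mul_diag htr
  set c : Fin k → ℝ := Pi.single j 1
  have hc : c ⬝ᵥ c = 1 := by simp [c]
  have hb : (G *ᵥ c) ⬝ᵥ (D *ᵥ c) = (Gᵀ * D) j j := by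
    simp [c, dotProduct, mul_apply]
  have hso := (hloc.rotation_conditions hA htr hc hv hGv).2
  rw [← dotProduct_Emat_mulVec_of_transpose_mulVec_eq_zero hGv, hEv, dotProduct_smul, hv,
    smul_eq_mul, mul_one, hb] at hso
  have hray := hM.iInf_eigenvalues_mul_dotProduct_le c
  rw [hc, mul_one, dotProduct_transpose_mul_Emat_mul_mulVec hloc.1, hb] at hray
  have hq : 0 < q := trace_transpose_mul_mul_pos hA hloc.1
  have hxi : xi A D G * p = q := div_mul_cancel₀ _ htr
  by_contra! hlt
  have hgap : 0 < p ^ 2 * ((G *ᵥ c) ⬝ᵥ (A *ᵥ (G *ᵥ c)) - μ - 2 * xi A D G * (Gᵀ * D) j j) :=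
    mul_pos (sq_pos_of_ne_zero htr) (by linarith)
  have hxib : p ^ 2 * xi A D G * (Gᵀ * D) j j = p * q * (Gᵀ * D) j j := by rw [← hxi]; ring
  nlinarith [mul_pos hq hpb, mul_nonneg hq.le (sq_nonneg (v ⬝ᵥ (D *ᵥ c)))]

theorem IsLocalMaxEta.iInf_eigenvalues_le [NeZero k] (hA : A.PosDef)
    (htr : trace (Gᵀ * D) ≠ 0) (hloc : IsLocalMaxEta A D G) (hv : v ⬝ᵥ v = 1) {μ : ℝ}
    (hEv : Emat A D G *ᵥ v = μ • v) :
    ⨅ j, (transpose_mul_mul_isHermitian (Emat_isHermitian hA.1 D G) G).eigenvalues j ≤ μ := by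
  by_cases hGv : Gᵀ *ᵥ v = 0
  · exact hloc.iInf_eigenvalues_le_of_transpose_mulVec_eq_zero hA htr hv hGv hEv
  -- otherwise `Gᵀ v` is an eigenvector of `Gᵀ E G` for `μ`, by the transpose of `E G = G (Gᵀ E G)`
  have hE := Emat_isHermitian hA.1 D G
  have hM := transpose_mul_mul_isHermitian hE G
  have hEG := congrArg transpose (hloc.Emat_mul_eq hA htr)
  rw [transpose_mul, transpose_mul, (isHermitian_iff_isSymm.mp hE).eq,
    (isHermitian_iff_isSymm.mp hM).eq] at hEG
  refine hM.iInf_eigenvalues_le_of_mulVec_eq hGv ?_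
  rw [mulVec_mulVec, ← hEG, ← mulVec_mulVec, hEv, mulVec_smul]

end LocalMax

/-- at a local maximizer `G` of `η` on `𝕆^{n×k}` (with `tr(GᵀD) ≠ 0`), the range
of `G` is an eigenspace of `E(G)`, i.e. `E(G)G = G(GᵀE(G)G)`, and the smallest eigenvalue of
`GᵀE(G)G` is at most `μ_k`, where `μ₁ ≤ … ≤ μ_n` are the eigenvalues of `E(G)` arranged in
nondecreasing order (with multiplicity). -/
theorem eigenspace_of_localMax
    (n k : ℕ) (hk1 : 1 ≤ k) (hkn : k < n)
    (A : Matrix (Fin n) (Fin n) ℝ) (hA : A.PosDef)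
    (D : Matrix (Fin n) (Fin k) ℝ)
    (G : Matrix (Fin n) (Fin k) ℝ)
    (htr : Matrix.trace (Gᵀ * D) ≠ 0)
    (hloc : IsLocalMaxEta A D G)
    (μ : Fin n → ℝ) (hμmono : Monotone μ)
    (hμ : ∃ σ : Equiv.Perm (Fin n), μ = (Emat_isHermitian hA.1 D G).eigenvalues ∘ σ) :
    Emat A D G * G = G * (Gᵀ * Emat A D G * G) ∧
      (⨅ j : Fin k,
          (transpose_mul_mul_isHermitian (Emat_isHermitian hA.1 D G) G).eigenvalues j) ≤
        μ ⟨k - 1, by omega⟩ := by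
  have : NeZero k := ⟨by omega⟩
  refine ⟨hloc.Emat_mul_eq hA htr, ?_⟩
  obtain ⟨σ, rfl⟩ := hμ
  set hE := Emat_isHermitian hA.1 D G
  set i := σ ⟨0, by omega⟩
  have hunit := dotProduct_self_eq_one_of_norm_eq_one (hE.eigenvectorBasis.orthonormal.1 i)
  calc _ ≤ hE.eigenvalues i := hloc.iInf_eigenvalues_le hA htr hunit (hE.mulVec_eigenvectorBasis i)
    _ ≤ _ := hμmono (Fin.mk_le_mk.mpr (Nat.zero_le _))
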